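/- Let p = ∑_{i=0}^{3} Cᵢ λᵢ be an affine function on a tetrahedron expressed in barycentric coordinates, and suppose ∫_{Fᵢ} b_{Fᵢ} p dS = 0 for each face Fᵢ (i = 0,1,2,3), where b_{Fᵢ} = ∏_{j≠i} λ_j is the cubic face bubble. Then p = 0. -/
import Mathlib

open MeasureTheory Set ENNReal NNReal intervalIntegral

lemma poly_int (u : ℝ) (k : ℕ → ℝ) (n : ℕ) :
    ∫ x in (0:ℝ)..u, ∑ i ∈ Finset.range n, k i * x ^ i
      = ∑ i ∈ Finset.range n, k i * u ^ (i+1) / (i+1) := by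
  rw [intervalIntegral.integral_finset_sum]
  · refine Finset.sum_congr rfl fun i _ => ?_
    rw [intervalIntegral.integral_const_mul, integral_pow]
    ring
  · intro i _
    exact (continuous_const.mul (continuous_pow i)).intervalIntegrable _ _

lemma inner_int (α β γ a : ℝ) :
    ∫ b in (0:ℝ)..(1-a), a*b*(1-a-b)*(α*a+β*b+γ*(1-a-b))
      = a*(α*a+γ*(1-a))*(1-a)^3/6 + a*(β-γ)*(1-a)^4/12 := by
  set k : ℕ → ℝ := fun i =>
    if i = 1 then a*(α*a+γ*(1-a))*(1-a)
    else if i = 2 then a*((β-γ)*(1-a)-(α*a+γ*(1-a)))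
    else if i = 3 then -(a*(β-γ)) else 0 with hk
  rw [intervalIntegral.integral_congr
      (g := fun b => ∑ i ∈ Finset.range 4, k i * b ^ i)
      (fun b _ => by simp [hk, Finset.sum_range_succ]; ring)]
  rw [poly_int]
  simp [hk, Finset.sum_range_succ]
  ring

lemma outer_int (α β γ : ℝ) :
    ∫ a in (0:ℝ)..1,
      (a*(α*a+γ*(1-a))*(1-a)^3/6 + a*(β-γ)*(1-a)^4/12) = (α+β+γ)/360 := by
  set k : ℕ → ℝ := fun i =>
    if i = 1 then (β+γ)/12
    else if i = 2 then α/6 - (β+γ)/3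
    else if i = 3 then -α/2 + (β+γ)/2
    else if i = 4 then α/2 - (β+γ)/3
    else if i = 5 then -α/6 + (β+γ)/12 else 0 with hk
  rw [intervalIntegral.integral_congr
      (g := fun x => ∑ i ∈ Finset.range 6, k i * x ^ i)
      (fun x _ => by simp [hk, Finset.sum_range_succ]; ring)]
  rw [poly_int]
  simp [hk, Finset.sum_range_succ]
  ring

lemma tri_int (α β γ : ℝ) :
    ∫ p in {p : ℝ × ℝ | 0 ≤ p.1 ∧ 0 ≤ p.2 ∧ p.1 + p.2 ≤ 1},
      p.1*p.2*(1-p.1-p.2)*(α*p.1+β*p.2+γ*(1-p.1-p.2)) = (α+β+γ)/360 := by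
  set T : Set (ℝ × ℝ) := {p | 0 ≤ p.1 ∧ 0 ≤ p.2 ∧ p.1 + p.2 ≤ 1} with hT
  set F : ℝ × ℝ → ℝ := fun p => p.1*p.2*(1-p.1-p.2)*(α*p.1+β*p.2+γ*(1-p.1-p.2)) with hF
  have hFc : Continuous F := by fun_prop
  have hTclosed : IsClosed T := by
    apply IsClosed.inter (isClosed_le continuous_const continuous_fst)
    exact IsClosed.inter (isClosed_le continuous_const continuous_snd)
      (isClosed_le (continuous_fst.add continuous_snd) continuous_const)
  have hTmeas : MeasurableSet T := hTclosed.measurableSet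
  have hTcomp : IsCompact T := by
    refine (isCompact_Icc (a := ((0:ℝ),(0:ℝ))) (b := ((1:ℝ),(1:ℝ)))).of_isClosed_subset hTclosed ?_
    rintro ⟨x, y⟩ ⟨hx, hy, hxy⟩
    simp only [Set.mem_Icc, Prod.le_def]
    dsimp only at *
    refine ⟨⟨hx, hy⟩, ?_, ?_⟩ <;> linarith
  have hInt : Integrable (T.indicator F) volume := by
    rw [integrable_indicator_iff hTmeas]
    exact hFc.continuousOn.integrableOn_compact hTcomp
  rw [← MeasureTheory.integral_indicator hTmeas]
  rw [Measure.volume_eq_prod] at hInt ⊢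
  rw [MeasureTheory.integral_prod _ hInt]
  have key : ∀ a : ℝ, (∫ b, T.indicator F (a, b))
      = (Icc (0:ℝ) 1).indicator
          (fun a => a*(α*a+γ*(1-a))*(1-a)^3/6 + a*(β-γ)*(1-a)^4/12) a := by
    intro a
    have hrw : (fun b => T.indicator F (a, b))
        = (Prod.mk a ⁻¹' T).indicator (fun b => F (a, b)) := by
      funext b
      by_cases h : (a, b) ∈ T <;> simp [Set.indicator, h]
    rw [hrw]
    by_cases ha : 0 ≤ a
    · have hpre : Prod.mk a ⁻¹' T = Icc 0 (1 - a) := by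
        ext b
        simp only [hT, Set.mem_preimage, Set.mem_setOf_eq, Set.mem_Icc]
        constructor
        · rintro ⟨_, h1, h2⟩; exact ⟨h1, by linarith⟩
        · rintro ⟨h1, h2⟩; exact ⟨ha, h1, by linarith⟩
      rw [hpre, MeasureTheory.integral_indicator measurableSet_Icc]
      by_cases ha1 : a ≤ 1
      · rw [MeasureTheory.integral_Icc_eq_integral_Ioc,
          ← intervalIntegral.integral_of_le (by linarith : (0:ℝ) ≤ 1 - a)]
        rw [show (fun b => F (a, b)) = fun b => a*b*(1-a-b)*(α*a+β*b+γ*(1-a-b)) from rfl]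
        rw [inner_int]
        rw [Set.indicator_of_mem (Set.mem_Icc.2 ⟨ha, ha1⟩)]
      · rw [Set.Icc_eq_empty (by linarith), Measure.restrict_empty, integral_zero_measure,
          Set.indicator_of_notMem (by simp [Set.mem_Icc]; intro; linarith)]
    · have hpre : Prod.mk a ⁻¹' T = ∅ := by
        ext b; simp only [hT, Set.mem_preimage, Set.mem_setOf_eq, Set.mem_empty_iff_false,
          iff_false]
        rintro ⟨h1, _, _⟩; exact ha h1
      rw [hpre, Set.indicator_empty, MeasureTheory.integral_zero,
        Set.indicator_of_notMem (by simp [Set.mem_Icc]; intro h; exact absurd h ha)]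
  simp_rw [key]
  rw [MeasureTheory.integral_indicator measurableSet_Icc, MeasureTheory.integral_Icc_eq_integral_Ioc,
    ← intervalIntegral.integral_of_le (zero_le_one)]
  exact outer_int α β γ

lemma tri_int_pi (α β γ : ℝ) :
    ∫ x in {x : Fin 2 → ℝ | 0 ≤ x 0 ∧ 0 ≤ x 1 ∧ x 0 + x 1 ≤ 1},
      x 0 * x 1 * (1 - x 0 - x 1) * (α * x 0 + β * x 1 + γ * (1 - x 0 - x 1)) ∂volume
      = (α + β + γ) / 360 := by
  have h := (volume_preserving_finTwoArrow ℝ).setIntegral_preimage_emb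
    (MeasurableEquiv.finTwoArrow.measurableEmbedding)
    (fun p : ℝ × ℝ => p.1*p.2*(1-p.1-p.2)*(α*p.1+β*p.2+γ*(1-p.1-p.2)))
    {p : ℝ × ℝ | 0 ≤ p.1 ∧ 0 ≤ p.2 ∧ p.1 + p.2 ≤ 1}
  rw [← tri_int α β γ, ← h]
  rfl

lemma comap_affine (M : (Fin 2 → ℝ) →ₗ[ℝ] (Fin 3 → ℝ)) (hM : Function.Injective M)
    (v : Fin 3 → ℝ) :
    ∃ cr : ℝ, 0 < cr ∧ ∀ (s : Set (Fin 2 → ℝ)) (f : (Fin 3 → ℝ) → ℝ), MeasurableSet s →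
      ∫ y in (fun x => v + M x) '' s, f y ∂(μH[2] : Measure (Fin 3 → ℝ))
        = cr * ∫ x in s, f (v + M x) ∂volume := by
  set ψ : (Fin 2 → ℝ) → (Fin 3 → ℝ) := fun x => v + M x with hψ
  have hψinj : Function.Injective ψ := fun a b h => hM (by simpa [hψ] using h)
  have hMemb : Topology.IsClosedEmbedding (M : (Fin 2 → ℝ) → (Fin 3 → ℝ)) :=
    M.isClosedEmbedding_of_injective (LinearMap.ker_eq_bot.2 hM)
  have hψemb : MeasurableEmbedding ψ := by
    have : Topology.IsClosedEmbedding ψ :=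
      (Homeomorph.addLeft v).isClosedEmbedding.comp hMemb
    exact this.measurableEmbedding
  set ν : Measure (Fin 2 → ℝ) := Measure.comap ψ (μH[2] : Measure (Fin 3 → ℝ)) with hν
  have hνap : ∀ s : Set (Fin 2 → ℝ), ν s = μH[2] (ψ '' s) :=
    fun s => hψemb.comap_apply _ s
  -- translation invariance
  have hinv : ν.IsAddLeftInvariant := by
    refine ⟨fun t => ?_⟩
    ext s hs
    rw [Measure.map_apply (measurable_const_add t) hs, hνap, hνap]
    have himg : ψ '' ((t + ·) ⁻¹' s) = (M t + ·) ⁻¹' (ψ '' s) := by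
      ext w
      simp only [Set.mem_image, Set.mem_preimage]
      constructor
      · rintro ⟨x, hx, rfl⟩
        exact ⟨t + x, hx, by simp only [hψ, map_add]; abel⟩
      · rintro ⟨z, hz, hzw⟩
        refine ⟨z - t, by simpa using hz, ?_⟩
        simp only [hψ] at hzw ⊢
        have h2 : v + M (z - t) = (v + M z) - M t := by rw [map_sub]; abel
        rw [h2, hzw]; abel
    rw [himg]
    exact measure_preimage_add _ _ _
  -- Lipschitz and antilipschitz bounds
  obtain ⟨KA, hKA0, hKA⟩ := M.exists_antilipschitzWith (LinearMap.ker_eq_bot.2 hM)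
  set KL : ℝ≥0 := ‖M.toContinuousLinearMap‖₊ with hKL
  have hLip : LipschitzWith KL ψ := by
    intro a b
    simpa [hψ, edist_add_left] using M.toContinuousLinearMap.lipschitz a b
  have hAnti : AntilipschitzWith KA ψ := fun a b => by
    simpa [hψ, edist_add_left] using hKA a b
  have hHpi2 : (μH[(2:ℝ)] : Measure (Fin 2 → ℝ)) = volume := by
    have := MeasureTheory.hausdorffMeasure_pi_real (ι := Fin 2)
    simpa using this
  -- finite on compacts
  have hfin : IsFiniteMeasureOnCompacts ν := by
    refine ⟨fun K hK => ?_⟩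
    rw [hνap]
    refine lt_of_le_of_lt (hLip.hausdorffMeasure_image_le (by norm_num : (0:ℝ) ≤ 2) K) ?_
    rw [hHpi2]
    exact ENNReal.mul_lt_top (ENNReal.rpow_lt_top_of_nonneg (by norm_num) ENNReal.coe_ne_top) hK.measure_lt_top
  haveI := hinv; haveI := hfin
  have heq : ν = (Measure.addHaarScalarFactor ν volume : ℝ≥0) • (volume : Measure (Fin 2 → ℝ)) :=
    Measure.isAddLeftInvariant_eq_smul ν volume
  set c : ℝ≥0 := Measure.addHaarScalarFactor ν volume with hc
  -- c positive via antilipschitz lower bound on unit box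
  have hcpos : 0 < c := by
    by_contra h
    have hc0 : c = 0 := by simpa using h
    have hbox : ν (Set.Icc 0 1) = 0 := by
      rw [heq, hc0]; simp
    have hlow : (volume : Measure (Fin 2 → ℝ)) (Set.Icc 0 1) ≤ (KA : ℝ≥0∞) ^ (2:ℝ) * μH[2] (ψ '' (Set.Icc 0 1)) := by
      rw [← hHpi2]
      exact hAnti.le_hausdorffMeasure_image (by norm_num) _
    rw [← hνap, hbox, mul_zero, nonpos_iff_eq_zero] at hlow
    have : (volume : Measure (Fin 2 → ℝ)) (Set.Icc 0 1) = 1 := by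
      rw [Real.volume_Icc_pi]
      simp
    rw [this] at hlow
    exact one_ne_zero hlow
  refine ⟨(c : ℝ), by exact_mod_cast hcpos, fun s f hs => ?_⟩
  have h1 : ∫ y in ψ '' s, f y ∂(Measure.map ψ ν)
      = ∫ y in ψ '' s, f y ∂(μH[2] : Measure (Fin 3 → ℝ)) := by
    rw [hψemb.map_comap]
    rw [Measure.restrict_restrict₀ ((hψemb.measurableSet_image' hs).nullMeasurableSet)]
    rw [Set.inter_eq_left.2 (Set.image_subset_range _ _)]
  rw [← h1, hψemb.setIntegral_map, Set.preimage_image_eq s hψinj]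
  have h2 : ν.restrict s = ((c : ℝ≥0∞) : ℝ≥0∞) • (volume : Measure (Fin 2 → ℝ)).restrict s := by
    rw [heq, ENNReal.smul_def, Measure.restrict_smul]
  rw [h2, MeasureTheory.integral_smul_measure]
  simp [hψ]

theorem stmt_13 (L : Fin 4 → ((Fin 3 → ℝ) →ₗ[ℝ] ℝ)) (c : Fin 4 → ℝ) (C : Fin 4 → ℝ)
    (hsum : ∀ y : Fin 3 → ℝ, ∑ j : Fin 4, (L j y + c j) = 1)
    (hnondeg : Function.Injective fun y : Fin 3 → ℝ => fun j : Fin 4 => L j y + c j)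
    (hmom : ∀ i : Fin 4,
      ∫ y in {y : Fin 3 → ℝ | L i y + c i = 0 ∧ ∀ j, 0 ≤ L j y + c j},
        (∏ j ∈ Finset.univ.erase i, (L j y + c j)) * (∑ k : Fin 4, C k * (L k y + c k))
        ∂(μH[2]) = 0) :
    ∀ y : Fin 3 → ℝ, ∑ k : Fin 4, C k * (L k y + c k) = 0 := by
  -- sum of constants is 1
  have hc1 : ∑ j : Fin 4, c j = 1 := by
    have := hsum 0
    simpa using this
  -- the linear part
  set l : (Fin 3 → ℝ) →ₗ[ℝ] (Fin 4 → ℝ) := LinearMap.pi L with hl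
  have hlinj : Function.Injective l := by
    intro y y' h
    apply hnondeg
    funext j
    have : L j y = L j y' := congrFun h j
    simp [this]
  -- existence of vertices
  have hvert : ∀ k : Fin 4, ∃ v : Fin 3 → ℝ, ∀ j, L j v + c j = if j = k then 1 else 0 := by
    set sumF : (Fin 4 → ℝ) →ₗ[ℝ] ℝ := ∑ j : Fin 4, LinearMap.proj j with hsF
    have hsFap : ∀ w : Fin 4 → ℝ, sumF w = ∑ j, w j := by
      intro w; simp [hsF]
    have hmem : ∀ y, l y ∈ LinearMap.ker sumF := by
      intro y
      rw [LinearMap.mem_ker, hsFap]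
      have h1 : ∑ j : Fin 4, (L j y + c j) = 1 := hsum y
      have : (∑ j : Fin 4, L j y) + ∑ j, c j = 1 := by
        rw [← Finset.sum_add_distrib]; exact h1
      have h3 : ∑ j : Fin 4, L j y = 0 := by rw [hc1] at this; linarith
      simpa [hl] using h3
    set l' : (Fin 3 → ℝ) →ₗ[ℝ] LinearMap.ker sumF := l.codRestrict _ hmem with hl'
    have hl'inj : Function.Injective l' := by
      intro a b h
      apply hlinj
      have := congrArg Subtype.val h
      simpa [hl'] using this
    have hrank : Module.finrank ℝ (LinearMap.ker sumF) = 3 := by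
      have hsurj : Function.Surjective sumF := by
        intro r
        refine ⟨fun _ => r/4, ?_⟩
        rw [hsFap]
        simp
        ring
      have hrk := LinearMap.finrank_range_add_finrank_ker sumF
      rw [LinearMap.range_eq_top.2 hsurj, finrank_top, Module.finrank_self] at hrk
      have h4 : Module.finrank ℝ (Fin 4 → ℝ) = 4 := by simp
      rw [h4] at hrk
      omega
    have hl'surj : Function.Surjective l' := by
      have h3 : Module.finrank ℝ (Fin 3 → ℝ) = 3 := by simp
      exact (LinearMap.injective_iff_surjective_of_finrank_eq_finrank
        (by rw [h3, hrank])).1 hl'inj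
    intro k
    have hwmem : (fun j => (if j = k then (1:ℝ) else 0) - c j) ∈ LinearMap.ker sumF := by
      rw [LinearMap.mem_ker, hsFap]
      rw [Finset.sum_sub_distrib, hc1]
      simp
    obtain ⟨y, hy⟩ := hl'surj ⟨_, hwmem⟩
    refine ⟨y, fun j => ?_⟩
    have := congrFun (congrArg Subtype.val hy) j
    simp only [hl', LinearMap.codRestrict_apply, hl, LinearMap.pi_apply] at this
    rw [this]
    ring
  choose v hv using hvert
  have hv' : ∀ (k j : Fin 4), L j (v k) = (if j = k then 1 else 0) - c j := by
    intro k j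
    have := hv k j
    linarith [this]
  -- main face computation
  have hface : ∀ i : Fin 4,
      C (i.succAbove 0) + C (i.succAbove 1) + C (i.succAbove 2) = 0 := by
    intro i
    set σ : Fin 3 → Fin 4 := i.succAbove with hσ
    have hσinj : Function.Injective σ := Fin.succAbove_right_injective
    have hσne : ∀ m, σ m ≠ i := fun m => Fin.succAbove_ne i m
    set M : (Fin 2 → ℝ) →ₗ[ℝ] (Fin 3 → ℝ) :=
      (LinearMap.proj 0 : (Fin 2 → ℝ) →ₗ[ℝ] ℝ).smulRight (v (σ 0) - v (σ 2))
        + (LinearMap.proj 1 : (Fin 2 → ℝ) →ₗ[ℝ] ℝ).smulRight (v (σ 1) - v (σ 2)) with hM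
    set ψ : (Fin 2 → ℝ) → (Fin 3 → ℝ) := fun x => v (σ 2) + M x with hψ
    have hlam : ∀ (x : Fin 2 → ℝ) (j : Fin 4), L j (ψ x) + c j
        = (if j = σ 0 then x 0 else 0) + (if j = σ 1 then x 1 else 0)
          + (if j = σ 2 then 1 - x 0 - x 1 else 0) := by
      intro x j
      have hL : L j (ψ x) = L j (v (σ 2))
          + (x 0 * (L j (v (σ 0)) - L j (v (σ 2)))
            + x 1 * (L j (v (σ 1)) - L j (v (σ 2)))) := by
        simp [hψ, hM, map_add, _root_.map_smul, map_sub, smul_eq_mul]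
      rw [hL, hv' (σ 0) j, hv' (σ 1) j, hv' (σ 2) j]
      have d01 : σ 0 ≠ σ 1 := fun h => by exact absurd (hσinj h) (by decide)
      have d02 : σ 0 ≠ σ 2 := fun h => by exact absurd (hσinj h) (by decide)
      have d12 : σ 1 ≠ σ 2 := fun h => by exact absurd (hσinj h) (by decide)
      by_cases h0 : j = σ 0
      · subst h0
        simp only [eq_self_iff_true, if_true, if_neg d01, if_neg d02]
        ring
      · by_cases h1 : j = σ 1
        · subst h1
          simp only [eq_self_iff_true, if_true, if_neg d12, if_neg (fun h => h0 h : ¬ σ 1 = σ 0)]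
          ring
        · by_cases h2 : j = σ 2
          · subst h2
            simp only [eq_self_iff_true, if_true, if_neg (fun h => h0 h : ¬ σ 2 = σ 0),
              if_neg (fun h => h1 h : ¬ σ 2 = σ 1)]
            ring
          · simp only [if_neg h0, if_neg h1, if_neg h2]
            ring
    have hv0 : ∀ x : Fin 2 → ℝ, L (σ 0) (ψ x) + c (σ 0) = x 0 := by
      intro x
      rw [hlam]
      have d01 : σ 0 ≠ σ 1 := fun h => by exact absurd (hσinj h) (by decide)
      have d02 : σ 0 ≠ σ 2 := fun h => by exact absurd (hσinj h) (by decide)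
      simp only [eq_self_iff_true, if_true, if_neg d01, if_neg d02]
      ring
    have hv1 : ∀ x : Fin 2 → ℝ, L (σ 1) (ψ x) + c (σ 1) = x 1 := by
      intro x
      rw [hlam]
      have d10 : σ 1 ≠ σ 0 := fun h => by exact absurd (hσinj h) (by decide)
      have d12 : σ 1 ≠ σ 2 := fun h => by exact absurd (hσinj h) (by decide)
      simp only [eq_self_iff_true, if_true, if_neg d10, if_neg d12]
      ring
    have hv2 : ∀ x : Fin 2 → ℝ, L (σ 2) (ψ x) + c (σ 2) = 1 - x 0 - x 1 := by
      intro x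
      rw [hlam]
      have d20 : σ 2 ≠ σ 0 := fun h => by exact absurd (hσinj h) (by decide)
      have d21 : σ 2 ≠ σ 1 := fun h => by exact absurd (hσinj h) (by decide)
      simp only [eq_self_iff_true, if_true, if_neg d20, if_neg d21]
      ring
    have hvi : ∀ x : Fin 2 → ℝ, L i (ψ x) + c i = 0 := by
      intro x
      rw [hlam]
      simp only [if_neg (Ne.symm (hσne 0)), if_neg (Ne.symm (hσne 1)),
        if_neg (Ne.symm (hσne 2))]
      ring
    have hMinj : Function.Injective M := by
      intro a b hab
      have hpsi : ψ a = ψ b := by simp [hψ, hab]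
      have e0 : a 0 = b 0 := by
        have := hv0 a
        rw [hpsi, hv0 b] at this
        linarith
      have e1 : a 1 = b 1 := by
        have := hv1 a
        rw [hpsi, hv1 b] at this
        linarith
      funext j
      fin_cases j
      · exact e0
      · exact e1
    set T : Set (Fin 2 → ℝ) := {x | 0 ≤ x 0 ∧ 0 ≤ x 1 ∧ x 0 + x 1 ≤ 1} with hT
    have hTmeas : MeasurableSet T := by
      apply MeasurableSet.inter
      · exact measurableSet_le measurable_const (measurable_pi_apply 0)
      apply MeasurableSet.inter
      · exact measurableSet_le measurable_const (measurable_pi_apply 1)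
      · exact measurableSet_le ((measurable_pi_apply 0).add (measurable_pi_apply 1))
          measurable_const
    -- sum identity for arbitrary y
    have hsumy : ∀ y : Fin 3 → ℝ,
        (L i y + c i) + ((L (σ 0) y + c (σ 0)) + (L (σ 1) y + c (σ 1))
          + (L (σ 2) y + c (σ 2))) = 1 := by
      intro y
      have h1 := Fin.sum_univ_succAbove (fun j => L j y + c j) i
      rw [hsum y] at h1
      rw [Fin.sum_univ_three] at h1
      linarith [h1]
    have hset : {y : Fin 3 → ℝ | L i y + c i = 0 ∧ ∀ j, 0 ≤ L j y + c j} = ψ '' T := by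
      ext y
      constructor
      · rintro ⟨hy0, hyall⟩
        refine ⟨![L (σ 0) y + c (σ 0), L (σ 1) y + c (σ 1)], ⟨?_, ?_, ?_⟩, ?_⟩
        · simpa using hyall (σ 0)
        · simpa using hyall (σ 1)
        · have := hyall (σ 2)
          have h1 := hsumy y
          simp only [Matrix.cons_val_zero, Matrix.cons_val_one, Matrix.head_cons]
          linarith
        · apply hnondeg
          funext j
          show L j (ψ _) + c j = L j y + c j
          rcases eq_or_ne j i with rfl | hji
          · rw [hvi, hy0]
          · obtain ⟨m, rfl⟩ := Fin.exists_succAbove_eq hji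
            simp only [show i.succAbove = σ from rfl]
            have : m = 0 ∨ m = 1 ∨ m = 2 := by omega
            rcases this with rfl | rfl | rfl
            · rw [hv0]; simp
            · rw [hv1]; simp
            · rw [hv2]
              have h1 := hsumy y
              simp only [Matrix.cons_val_zero, Matrix.cons_val_one, Matrix.head_cons]
              linarith
      · rintro ⟨x, hxT, rfl⟩
        obtain ⟨hx0, hx1, hx01⟩ := hxT
        refine ⟨hvi x, fun j => ?_⟩
        rcases eq_or_ne j i with rfl | hji
        · rw [hvi]
        · obtain ⟨m, rfl⟩ := Fin.exists_succAbove_eq hji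
          simp only [show i.succAbove = σ from rfl]
          have : m = 0 ∨ m = 1 ∨ m = 2 := by omega
          rcases this with rfl | rfl | rfl
          · rw [hv0]; exact hx0
          · rw [hv1]; exact hx1
          · rw [hv2]; linarith
    obtain ⟨cr, hcrpos, hint⟩ := comap_affine M hMinj (v (σ 2))
    have h := hmom i
    rw [hset] at h
    have hψim : ψ '' T = (fun x => v (σ 2) + M x) '' T := rfl
    rw [hψim, hint T _ hTmeas] at h
    have hfun : (fun x : Fin 2 → ℝ =>
        (∏ j ∈ Finset.univ.erase i, (L j (v (σ 2) + M x) + c j))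
          * (∑ k : Fin 4, C k * (L k (v (σ 2) + M x) + c k)))
        = fun x : Fin 2 → ℝ => x 0 * x 1 * (1 - x 0 - x 1)
            * (C (σ 0) * x 0 + C (σ 1) * x 1 + C (σ 2) * (1 - x 0 - x 1)) := by
      funext x
      have himg : Finset.univ.erase i = Finset.image σ Finset.univ := by
        ext j
        simp only [Finset.mem_erase, Finset.mem_univ, and_true, Finset.mem_image,
          true_and]
        constructor
        · intro hji
          obtain ⟨m, hm⟩ := Fin.exists_succAbove_eq hji
          exact ⟨m, hm⟩
        · rintro ⟨m, rfl⟩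
          exact hσne m
      have hprod : (∏ j ∈ Finset.univ.erase i, (L j (v (σ 2) + M x) + c j))
          = x 0 * x 1 * (1 - x 0 - x 1) := by
        rw [himg, Finset.prod_image (fun a _ b _ h => hσinj h), Fin.prod_univ_three]
        rw [show ∀ m, L (σ m) (v (σ 2) + M x) + c (σ m) = L (σ m) (ψ x) + c (σ m)
          from fun m => rfl]
        rw [hv0, hv1, hv2]
      have hsum2 : (∑ k : Fin 4, C k * (L k (v (σ 2) + M x) + c k))
          = C (σ 0) * x 0 + C (σ 1) * x 1 + C (σ 2) * (1 - x 0 - x 1) := by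
        rw [Fin.sum_univ_succAbove (fun k => C k * (L k (v (σ 2) + M x) + c k)) i]
        rw [Fin.sum_univ_three]
        show C i * (L i (ψ x) + c i) + (C (σ 0) * (L (σ 0) (ψ x) + c (σ 0))
          + C (σ 1) * (L (σ 1) (ψ x) + c (σ 1)) + C (σ 2) * (L (σ 2) (ψ x) + c (σ 2)))
          = _
        rw [hvi, hv0, hv1, hv2]
        ring
      rw [hprod, hsum2]
    rw [hfun] at h
    rw [show T = {x : Fin 2 → ℝ | 0 ≤ x 0 ∧ 0 ≤ x 1 ∧ x 0 + x 1 ≤ 1} from rfl] at h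
    rw [tri_int_pi (C (σ 0)) (C (σ 1)) (C (σ 2))] at h
    have := mul_eq_zero.1 h
    rcases this with h' | h'
    · exact absurd h' (ne_of_gt hcrpos)
    · have : C (σ 0) + C (σ 1) + C (σ 2) = 0 := by
        field_simp at h'
        linarith
      exact this
  -- conclude C = 0
  have hCi : ∀ i : Fin 4, C i = ∑ k : Fin 4, C k := by
    intro i
    have h1 := Fin.sum_univ_succAbove C i
    rw [Fin.sum_univ_three] at h1
    rw [hface i] at h1
    linarith
  have hS0 : ∑ k : Fin 4, C k = 0 := by
    have h4 : ∑ i : Fin 4, C i = ∑ _i : Fin 4, (∑ k : Fin 4, C k) :=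
      Finset.sum_congr rfl fun i _ => hCi i
    rw [Finset.sum_const] at h4
    simp only [Finset.card_univ, Fintype.card_fin, nsmul_eq_mul, Nat.cast_ofNat] at h4
    linarith
  have hC0 : ∀ i, C i = 0 := fun i => by rw [hCi i, hS0]
  intro y
  simp [hC0]
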